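/- Let A be a real n×p matrix admitting a (thin) singular value decomposition A = U D Vᵀ with UᵀU = I_p, V a p×p orthogonal matrix, and D a p×p diagonal matrix with nonnegative diagonal entries. Then the maximum of tr(Hᵀ A) over all real n×p matrices H with HᵀH = I_p is exactly tr(D), and it is attained at H = U Vᵀ; i.e. tr(D) = tr(√(AᵀA)) and for every semi-orthogonal H, tr(Hᵀ A) ≤ tr((U Vᵀ)ᵀ A) = tr(D). -/

import Mathlib

/-!
With `W = H V`, which again has orthonormal columns, `tr (Hᵀ A) = tr (Wᵀ U D) = ∑ᵢ (Wᵀ U)ᵢᵢ dᵢ`,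
and each `(Wᵀ U)ᵢᵢ` is an inner product of two unit vectors, hence at most `1` by Cauchy–Schwarz.
For `H = U Vᵀ` one gets `(U Vᵀ)ᵀ A = V D Vᵀ`, a positive semidefinite matrix whose square is
`Aᵀ A`; so it is `√(Aᵀ A)`, and its trace is `tr D`.
-/

open Matrix

/-- The positive semidefinite square root of a positive semidefinite matrix, as defined in
Mathlib (December 2024); Mathlib has since removed it in favour of `CFC.sqrt`. -/
noncomputable def Matrix.PosSemidef.sqrt {n 𝕜 : Type*} [Fintype n] [RCLike 𝕜] [PartialOrder 𝕜] [DecidableEq n]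
    {A : Matrix n n 𝕜} (hA : A.PosSemidef) : Matrix n n 𝕜 :=
  hA.1.eigenvectorUnitary.1 * diagonal ((↑) ∘ (√·) ∘ hA.1.eigenvalues) *
  (star hA.1.eigenvectorUnitary : Matrix n n 𝕜)

namespace Matrix

variable {m n : Type*} [Fintype m]

theorem sq_transpose_mul_apply_le (W U : Matrix m n ℝ) (i : n) :
    (Wᵀ * U) i i ^ 2 ≤ (Wᵀ * W) i i * (Uᵀ * U) i i := by
  simpa only [mul_apply, transpose_apply, sq] using
    Finset.sum_mul_sq_le_sq_mul_sq Finset.univ (fun k => W k i) (fun k => U k i)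

variable [Fintype n]

theorem trace_transpose_mul_svd (H U : Matrix m n ℝ) (D V : Matrix n n ℝ) :
    (Hᵀ * (U * D * Vᵀ)).trace = ((H * V)ᵀ * U * D).trace := by
  rw [transpose_mul, Matrix.mul_assoc Vᵀ, Matrix.mul_assoc Vᵀ, trace_mul_comm Vᵀ]
  simp only [Matrix.mul_assoc]

variable [DecidableEq n]

open scoped MatrixOrder in
theorem PosSemidef.eq_sqrt_of_sq_eq {A B : Matrix n n ℝ}
    (hB : B.PosSemidef) (hA : A.PosSemidef) (h : B ^ 2 = A) : B = hA.sqrt := by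
  have hcfc : CFC.sqrt A = B := CFC.sqrt_unique (by rw [← sq, h]) hB.nonneg
  rw [← hcfc, CFC.sqrt_eq_cfc, cfc_nnreal_eq_real _ A, hA.1.cfc_eq]
  simp only [IsHermitian.cfc, PosSemidef.sqrt, Unitary.conjStarAlgAut_apply]
  congr 3
  funext i
  simp [max_eq_left (hA.eigenvalues_nonneg i)]

omit [Fintype n] in
theorem transpose_mul_apply_le_one {W U : Matrix m n ℝ} (hW : Wᵀ * W = 1) (hU : Uᵀ * U = 1)
    (i : n) : (Wᵀ * U) i i ≤ 1 := by
  have h := sq_transpose_mul_apply_le W U i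
  rw [hW, hU, one_apply_eq, one_mul, sq_le_one_iff_abs_le_one] at h
  exact (le_abs_self _).trans h

theorem trace_mul_diagonal_le {M : Matrix n n ℝ} (hM : ∀ i, M i i ≤ 1) {d : n → ℝ}
    (hd : ∀ i, 0 ≤ d i) : (M * diagonal d).trace ≤ (diagonal d).trace := by
  simp only [trace, diag_apply, mul_diagonal, diagonal_apply_eq]
  exact Finset.sum_le_sum fun i _ => mul_le_of_le_one_left (hd i) (hM i)

theorem trace_conj_transpose_of_orthogonal {V : Matrix n n ℝ} (hV : Vᵀ * V = 1)
    (D : Matrix n n ℝ) : (V * D * Vᵀ).trace = D.trace := by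
  rw [trace_mul_comm, ← Matrix.mul_assoc, hV, Matrix.one_mul]

section SVD

variable {U : Matrix m n ℝ} (hU : Uᵀ * U = 1) (D V : Matrix n n ℝ)
include hU

theorem transpose_mul_svd_self : (U * Vᵀ)ᵀ * (U * D * Vᵀ) = V * D * Vᵀ := by
  simp only [transpose_mul, transpose_transpose, Matrix.mul_assoc]
  rw [← Matrix.mul_assoc Uᵀ U, hU, Matrix.one_mul]

theorem svd_transpose_mul_self (hV : Vᵀ * V = 1) (hD : Dᵀ = D) :
    (U * D * Vᵀ)ᵀ * (U * D * Vᵀ) = (V * D * Vᵀ) ^ 2 := by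
  simp only [sq, transpose_mul, transpose_transpose, hD, Matrix.mul_assoc]
  rw [← Matrix.mul_assoc Uᵀ U, hU, Matrix.one_mul, ← Matrix.mul_assoc Vᵀ V, hV, Matrix.one_mul]

end SVD

end Matrix

theorem trace_max_over_semiorthogonal_general {n p : ℕ}
    (A U : Matrix (Fin n) (Fin p) ℝ) (V D : Matrix (Fin p) (Fin p) ℝ)
    (d : Fin p → ℝ)
    (hSVD : A = U * D * Vᵀ)
    (hU : Uᵀ * U = 1)
    (hV₁ : Vᵀ * V = 1)
    (hD : D = Matrix.diagonal d) (hd : ∀ i, 0 ≤ d i)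
    (hS : (Aᵀ * A).PosSemidef) :
    D.trace = hS.sqrt.trace ∧
      ((U * Vᵀ)ᵀ * A).trace = D.trace ∧
      ∀ H : Matrix (Fin n) (Fin p) ℝ, Hᵀ * H = 1 →
        (Hᵀ * A).trace ≤ ((U * Vᵀ)ᵀ * A).trace := by
  have hattain : ((U * Vᵀ)ᵀ * A).trace = D.trace := by
    rw [hSVD, transpose_mul_svd_self hU, trace_conj_transpose_of_orthogonal hV₁]
  have hsqrt : V * D * Vᵀ = hS.sqrt := by
    have hDpsd : D.PosSemidef := hD ▸ posSemidef_diagonal_iff.mpr hd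
    refine PosSemidef.eq_sqrt_of_sq_eq ?_ hS ?_
    · simpa using hDpsd.mul_mul_conjTranspose_same V
    · rw [hSVD, svd_transpose_mul_self hU D V hV₁ (hD ▸ diagonal_transpose d)]
  refine ⟨by rw [← hsqrt, trace_conj_transpose_of_orthogonal hV₁], hattain, fun H hH => ?_⟩
  have hW : (H * V)ᵀ * (H * V) = 1 := by
    rw [transpose_mul, Matrix.mul_assoc, ← Matrix.mul_assoc Hᵀ, hH, Matrix.one_mul, hV₁]
  rw [hattain, hSVD, trace_transpose_mul_svd, hD]
  exact trace_mul_diagonal_le (transpose_mul_apply_le_one hW hU) hd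

/-- Let `A = U D Vᵀ` be a thin SVD (`Uᵀ U = I_p`, `V` orthogonal `p×p`, `D` diagonal
with nonnegative entries). Then the maximum of `tr(Hᵀ A)` over semi-orthogonal `H`
(`Hᵀ H = I_p`) equals `tr(D)`, attained at `H = U Vᵀ`; moreover
`tr(D) = tr(√(Aᵀ A))`, the sum of the singular values of `A`. -/
theorem trace_max_over_semiorthogonal {n p : ℕ}
    (A U : Matrix (Fin n) (Fin p) ℝ) (V D : Matrix (Fin p) (Fin p) ℝ)
    (d : Fin p → ℝ)
    (hSVD : A = U * D * Vᵀ)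
    (hU : Uᵀ * U = 1)
    (hV₁ : Vᵀ * V = 1) (hV₂ : V * Vᵀ = 1)
    (hD : D = Matrix.diagonal d) (hd : ∀ i, 0 ≤ d i)
    (hS : (Aᵀ * A).PosSemidef) :
    D.trace = hS.sqrt.trace ∧
      ((U * Vᵀ)ᵀ * A).trace = D.trace ∧
      ∀ H : Matrix (Fin n) (Fin p) ℝ, Hᵀ * H = 1 →
        (Hᵀ * A).trace ≤ ((U * Vᵀ)ᵀ * A).trace :=
  trace_max_over_semiorthogonal_general A U V D d hSVD hU hV₁ hD hd hS
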